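/- Let u : ℝ → ℝ be continuous with compact support and globally Hölder continuous: there exist β ∈ (0,1] and M ≥ 0 with |u(s) − u(t)| ≤ M|s − t|^β for all s, t ∈ ℝ. Then for every x ∈ ℝ, the limit as α → 0⁺ of −c_{1,α} ∫_0^∞ δ²u(x,ξ) ξ^{−(1+α)} dξ equals u(x); that is, the fractional Laplacian converges pointwise to the identity operator as α → 0⁺. -/

import Mathlib

/-!
Split the integral at `ξ = 1` and pull the constant term `-2 u(x)` of `δ²u(x,ξ)` out of the
integral over `(1, ∞)`: against `ξ^(-1-α)` it contributes `-2 u(x) / α`. What remains stays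
bounded as `α → 0⁺`: on `(0, 1]` the Hölder bound `|δ²u(x,ξ)| ≤ 2 M ξ^β` gives an integrable
majorant `ξ^(β-1-α)` uniformly for `α < β / 2`, and on `(1, ∞)` the integrand is dominated by the
integrable function `|u(x+ξ) + u(x-ξ)|`. Finally `c_{1,α} = α q(α)` with `q` continuous at `0` and
`q(0) = Γ(1/2) / (2√π) = 1/2`, so `c_{1,α}` kills the bounded part while
`c_{1,α} · 2 u(x) / α → u(x)`.
-/

open MeasureTheory Set Filter

/-- The one-dimensional normalization constant
`c_{1,α} = 2^{α−1} α Γ((1+α)/2) / (√π Γ(1 − α/2))` of the fractional Laplacian. -/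
noncomputable def fracLapConst (α : ℝ) : ℝ :=
  2 ^ (α - 1) * α * Real.Gamma ((1 + α) / 2) / (Real.sqrt Real.pi * Real.Gamma (1 - α / 2))

open Topology Real

noncomputable def fracLapConstQuot (α : ℝ) : ℝ :=
  2 ^ (α - 1) * Gamma ((1 + α) / 2) / (√π * Gamma (1 - α / 2))

lemma fracLapConst_eq_mul_quot (α : ℝ) : fracLapConst α = α * fracLapConstQuot α := by
  unfold fracLapConst fracLapConstQuot
  ring

lemma fracLapConstQuot_zero : fracLapConstQuot 0 = 1 / 2 := by
  have : √π ≠ 0 := by positivity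
  norm_num [fracLapConstQuot, Gamma_one_half_eq, rpow_neg_one, this]

lemma continuousAt_Gamma_of_pos {s : ℝ} (hs : 0 < s) : ContinuousAt Gamma s :=
  (differentiableAt_Gamma fun m h => by linarith [h ▸ hs, (m.cast_nonneg : (0:ℝ) ≤ m)]).continuousAt

lemma continuousAt_fracLapConstQuot_zero : ContinuousAt fracLapConstQuot 0 := by
  have h₁ : ContinuousAt (fun α : ℝ => Gamma ((1 + α) / 2)) 0 :=
    (continuousAt_Gamma_of_pos (by norm_num)).comp (f := fun α : ℝ => (1 + α) / 2) (by fun_prop)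
  have h₂ : ContinuousAt (fun α : ℝ => Gamma (1 - α / 2)) 0 :=
    (continuousAt_Gamma_of_pos (by norm_num)).comp (f := fun α : ℝ => 1 - α / 2) (by fun_prop)
  refine ((continuousAt_const_rpow two_ne_zero).comp (by fun_prop) |>.mul h₁).div
    (continuousAt_const.mul h₂) ?_
  simp [(sqrt_pos.2 pi_pos).ne']

lemma tendsto_fracLapConst_zero : Tendsto fracLapConst (𝓝 0) (𝓝 0) := by
  rw [funext fracLapConst_eq_mul_quot]
  simpa using (continuous_id.tendsto 0).mul continuousAt_fracLapConstQuot_zero.tendsto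

lemma tendsto_neg_fracLapConst_mul {I E : ℝ → ℝ} {v K : ℝ}
    (hI : ∀ᶠ α in 𝓝[>] 0, I α = E α - 2 * v / α) (hE : ∀ᶠ α in 𝓝[>] 0, |E α| ≤ K) :
    Tendsto (fun α => -(fracLapConst α * I α)) (𝓝[>] 0) (𝓝 v) := by
  have hcE : Tendsto (fun α => fracLapConst α * E α) (𝓝[>] 0) (𝓝 0) :=
    (tendsto_fracLapConst_zero.mono_left nhdsWithin_le_nhds).zero_mul_isBoundedUnder_le
      (isBoundedUnder_of_eventually_le hE)
  have hq : Tendsto (fun α => 2 * v * fracLapConstQuot α) (𝓝[>] 0) (𝓝 v) := by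
    have := (continuousAt_fracLapConstQuot_zero.tendsto.mono_left
      (nhdsWithin_le_nhds (s := Ioi 0))).const_mul (2 * v)
    rwa [fracLapConstQuot_zero, show 2 * v * (1 / 2) = v by ring] at this
  refine (by simpa using hcE.neg.add hq : Tendsto _ _ (𝓝 v)).congr' ?_
  filter_upwards [hI, self_mem_nhdsWithin] with α hIα hα
  rw [hIα, fracLapConst_eq_mul_quot]
  field_simp [(mem_Ioi.1 hα).ne']
  ring

section WeightedIntegrals

variable {g : ℝ → ℝ} {α β K : ℝ}

lemma norm_mul_rpow_le_of_abs_le (hg : ∀ ξ ∈ Ioc (0:ℝ) 1, |g ξ| ≤ K * ξ ^ β) :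
    ∀ ξ ∈ Ioc (0:ℝ) 1, ‖g ξ * ξ ^ (-(1 + α))‖ ≤ K * ξ ^ (β - 1 - α) := by
  intro ξ hξ
  have hw : 0 < ξ ^ (-(1 + α)) := rpow_pos_of_pos hξ.1 _
  calc ‖g ξ * ξ ^ (-(1 + α))‖ = |g ξ| * ξ ^ (-(1 + α)) := by
        rw [norm_mul, norm_of_nonneg hw.le, Real.norm_eq_abs]
    _ ≤ K * ξ ^ β * ξ ^ (-(1 + α)) := by gcongr; exact hg ξ hξ
    _ = K * ξ ^ (β - 1 - α) := by rw [mul_assoc, ← rpow_add hξ.1]; ring_nf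

lemma integrableOn_Ioc_const_mul_rpow (hαβ : α < β) :
    IntegrableOn (fun ξ : ℝ => K * ξ ^ (β - 1 - α)) (Ioc 0 1) :=
  ((intervalIntegral.intervalIntegrable_rpow' (by linarith)).1).const_mul K

lemma integrableOn_Ioc_mul_rpow_of_abs_le
    (hgm : AEStronglyMeasurable g (volume.restrict (Ioc 0 1)))
    (hg : ∀ ξ ∈ Ioc (0:ℝ) 1, |g ξ| ≤ K * ξ ^ β) (hαβ : α < β) :
    IntegrableOn (fun ξ => g ξ * ξ ^ (-(1 + α))) (Ioc 0 1) :=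
  (integrableOn_Ioc_const_mul_rpow hαβ).mono'
    (hgm.mul (measurable_id.pow_const _).aestronglyMeasurable)
    ((ae_restrict_iff' measurableSet_Ioc).2 (.of_forall (norm_mul_rpow_le_of_abs_le hg)))

lemma abs_setIntegral_Ioc_mul_rpow_le (hg : ∀ ξ ∈ Ioc (0:ℝ) 1, |g ξ| ≤ K * ξ ^ β)
    (hαβ : α < β) : |∫ ξ in Ioc (0:ℝ) 1, g ξ * ξ ^ (-(1 + α))| ≤ K / (β - α) := by
  have hint : ∫ ξ in Ioc (0:ℝ) 1, K * ξ ^ (β - 1 - α) = K / (β - α) := by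
    rw [integral_const_mul, ← intervalIntegral.integral_of_le zero_le_one,
      integral_rpow (.inl (by linarith)), show β - 1 - α + 1 = β - α by ring, one_rpow,
      zero_rpow (sub_ne_zero.2 hαβ.ne')]
    ring
  rw [← Real.norm_eq_abs, ← hint]
  exact norm_integral_le_of_norm_le (integrableOn_Ioc_const_mul_rpow hαβ)
    ((ae_restrict_iff' measurableSet_Ioc).2 (.of_forall (norm_mul_rpow_le_of_abs_le hg)))

lemma norm_rpow_neg_one_add_le_one (hα : 0 ≤ α) :
    ∀ ξ ∈ Ioi (1:ℝ), ‖ξ ^ (-(1 + α))‖ ≤ 1 := fun ξ hξ => by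
  rw [norm_of_nonneg (rpow_nonneg (zero_le_one.trans hξ.le) _)]
  exact rpow_le_one_of_one_le_of_nonpos hξ.le (by linarith)

lemma integrableOn_Ioi_mul_rpow (hg : IntegrableOn g (Ioi 1)) (hα : 0 ≤ α) :
    IntegrableOn (fun ξ => g ξ * ξ ^ (-(1 + α))) (Ioi 1) :=
  hg.mul_bdd (measurable_id.pow_const _).aestronglyMeasurable
    ((ae_restrict_iff' measurableSet_Ioi).2 (.of_forall (norm_rpow_neg_one_add_le_one hα)))

lemma abs_setIntegral_Ioi_mul_rpow_le (hg : IntegrableOn g (Ioi 1)) (hα : 0 ≤ α) :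
    |∫ ξ in Ioi (1:ℝ), g ξ * ξ ^ (-(1 + α))| ≤ ∫ ξ in Ioi (1:ℝ), |g ξ| := by
  rw [← Real.norm_eq_abs]
  refine norm_integral_le_of_norm_le hg.abs ((ae_restrict_iff' measurableSet_Ioi).2
    (.of_forall fun ξ hξ => ?_))
  rw [norm_mul, Real.norm_eq_abs]
  exact mul_le_of_le_one_right (abs_nonneg _) (norm_rpow_neg_one_add_le_one hα ξ hξ)

lemma integral_Ioi_one_rpow_neg_one_add (hα : 0 < α) :
    ∫ ξ in Ioi (1:ℝ), ξ ^ (-(1 + α)) = 1 / α := by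
  rw [integral_Ioi_rpow_of_lt (by linarith) one_pos, one_rpow,
    show -(1 + α) + 1 = -α by ring, div_neg, neg_div, neg_neg]

end WeightedIntegrals

section SecondDifference

variable {u : ℝ → ℝ}

lemma abs_secondDiff_le_of_holder {M β : ℝ} (hu : ∀ s t : ℝ, |u s - u t| ≤ M * |s - t| ^ β)
    (x ξ : ℝ) : |u (x + ξ) - 2 * u x + u (x - ξ)| ≤ 2 * M * |ξ| ^ β :=
  calc |u (x + ξ) - 2 * u x + u (x - ξ)| = |(u (x + ξ) - u x) + (u (x - ξ) - u x)| := by ring_nf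
    _ ≤ M * |x + ξ - x| ^ β + M * |x - ξ - x| ^ β :=
        (abs_add_le _ _).trans (add_le_add (hu _ _) (hu _ _))
    _ = 2 * M * |ξ| ^ β := by rw [add_sub_cancel_left, sub_sub_cancel_left, abs_neg]; ring

lemma setIntegral_Ioi_secondDiff_mul_rpow {x α : ℝ} (hα : 0 < α)
    (h₀ : IntegrableOn (fun ξ => (u (x + ξ) - 2 * u x + u (x - ξ)) * ξ ^ (-(1 + α))) (Ioc 0 1))
    (h₁ : IntegrableOn (fun ξ => (u (x + ξ) + u (x - ξ)) * ξ ^ (-(1 + α))) (Ioi 1)) :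
    ∫ ξ in Ioi (0:ℝ), (u (x + ξ) - 2 * u x + u (x - ξ)) * ξ ^ (-(1 + α)) =
      (∫ ξ in Ioc (0:ℝ) 1, (u (x + ξ) - 2 * u x + u (x - ξ)) * ξ ^ (-(1 + α))) +
        (∫ ξ in Ioi (1:ℝ), (u (x + ξ) + u (x - ξ)) * ξ ^ (-(1 + α))) - 2 * u x / α := by
  have hw : IntegrableOn (fun ξ : ℝ => 2 * u x * ξ ^ (-(1 + α))) (Ioi 1) :=
    (integrableOn_Ioi_rpow_of_lt (by linarith) one_pos).const_mul _
  have h_split : EqOn (fun ξ => (u (x + ξ) - 2 * u x + u (x - ξ)) * ξ ^ (-(1 + α)))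
      (fun ξ => (u (x + ξ) + u (x - ξ)) * ξ ^ (-(1 + α)) - 2 * u x * ξ ^ (-(1 + α))) (Ioi 1) :=
    fun ξ _ => by ring
  rw [← Ioc_union_Ioi_eq_Ioi zero_le_one, setIntegral_union (Ioc_disjoint_Ioi le_rfl)
    measurableSet_Ioi h₀ ((h₁.sub hw).congr_fun h_split.symm measurableSet_Ioi),
    setIntegral_congr_fun measurableSet_Ioi h_split, integral_sub h₁ hw, integral_const_mul,
    integral_Ioi_one_rpow_neg_one_add hα]
  ring

end SecondDifference

/-- If `u : ℝ → ℝ` is continuous with compact support and globally `β`-Hölder continuous,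
then for every `x` the fractional Laplacian
`−c_{1,α} ∫_0^∞ δ²u(x,ξ) ξ^{−(1+α)} dξ` converges to `u(x)` as `α → 0⁺`. -/
theorem stmt19 (u : ℝ → ℝ) (hcont : Continuous u) (hsupp : HasCompactSupport u)
    (β M : ℝ) (hβ : β ∈ Set.Ioc (0:ℝ) 1) (hM : 0 ≤ M)
    (hHolder : ∀ s t : ℝ, |u s - u t| ≤ M * |s - t| ^ β) (x : ℝ) :
    Filter.Tendsto (fun α : ℝ =>
        -(fracLapConst α *
          ∫ ξ in Set.Ioi (0:ℝ), (u (x + ξ) - 2 * u x + u (x - ξ)) * ξ ^ (-(1 + α))))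
      (nhdsWithin 0 (Set.Ioi 0)) (nhds (u x)) := by
  obtain ⟨hβ₀, -⟩ := hβ
  have hu : Integrable u := hcont.integrable_of_hasCompactSupport hsupp
  have h_tail : IntegrableOn (fun ξ => u (x + ξ) + u (x - ξ)) (Ioi 1) :=
    ((hu.comp_add_left x).add (hu.comp_sub_left x)).integrableOn
  have h_near : ∀ ξ ∈ Ioc (0:ℝ) 1, |u (x + ξ) - 2 * u x + u (x - ξ)| ≤ 2 * M * ξ ^ β :=
    fun ξ hξ => by simpa [abs_of_pos hξ.1] using abs_secondDiff_le_of_holder hHolder x ξ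
  refine tendsto_neg_fracLapConst_mul
    (K := 2 * M / (β / 2) + ∫ ξ in Ioi (1:ℝ), |u (x + ξ) + u (x - ξ)|)
    (E := fun α => (∫ ξ in Ioc (0:ℝ) 1, (u (x + ξ) - 2 * u x + u (x - ξ)) * ξ ^ (-(1 + α))) +
      ∫ ξ in Ioi (1:ℝ), (u (x + ξ) + u (x - ξ)) * ξ ^ (-(1 + α))) ?_ ?_
  · filter_upwards [Ioo_mem_nhdsGT hβ₀] with α hα
    exact setIntegral_Ioi_secondDiff_mul_rpow hα.1
      (integrableOn_Ioc_mul_rpow_of_abs_le (by fun_prop) h_near hα.2)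
      (integrableOn_Ioi_mul_rpow h_tail hα.1.le)
  · filter_upwards [Ioo_mem_nhdsGT (half_pos hβ₀)] with α hα
    have h_near_bound := abs_setIntegral_Ioc_mul_rpow_le h_near (by linarith [hα.2] : α < β)
    refine (abs_add_le _ _).trans (add_le_add (h_near_bound.trans ?_)
      (abs_setIntegral_Ioi_mul_rpow_le h_tail hα.1.le))
    gcongr
    linarith [hα.2]
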